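/- arXiv:1509.01032 — 2 statements merged into one kernel-verified Lean document; each statement's English description precedes it below -/
import Mathlib

section
/- Let n ≥ 9 and let i be an integer with 0 ≤ i ≤ n−7. Define permutations ρ_0, …, ρ_{n−4} of {1, …, n} by: ρ_j = (j+1, j+2) for 0 ≤ j ≤ i; ρ_{i+1} = (i+2, i+3)(i+4, i+5); ρ_{i+2} = (i+3, i+4)(i+5, i+6); and ρ_j = (j+3, j+4) for i+3 ≤ j ≤ n−4. Then the intersection of the subgroup generated by ρ_0, …, ρ_{i+2} with the subgroup generated by ρ_{i+1}, …, ρ_{n−4} is strictly larger than the subgroup generated by ρ_{i+1} and ρ_{i+2}; in particular, ρ_0, …, ρ_{n−4} do not satisfy the intersection property and hence do not form a string C-group. -/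
/-!
Write `vₖ` for the point `i + k` of `Fin n` (the paper's `i + k + 1`).
The transposition `(v₃ v₄)` lies in `⟨ρ₀, …, ρ_{i+2}⟩`: conjugating `ρᵢ = (v₀ v₁)` by
`ρᵢ ρ_{i+1}` gives `(v₁ v₂)`, and `(v₁ v₂) ρ_{i+1} = (v₃ v₄)`. It also lies in
`⟨ρ_{i+1}, …, ρ_{n-4}⟩`: conjugating `ρ_{i+3} = (v₅ v₆)` by `ρ_{i+2}` and then by `ρ_{i+1}`
gives `(v₄ v₆)` and `(v₃ v₆)`, and `(v₄ v₆)` conjugates `(v₃ v₆)` to `(v₃ v₄)`.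
But `ρ_{i+1}` and `ρ_{i+2}` are even permutations, so the odd `(v₃ v₄)` is not in the group
they generate.
-/

/-- The intersection property for a family of permutations indexed by `Fin r`. -/
def IntersectionProperty {n r : ℕ} (ρ : Fin r → Equiv.Perm (Fin n)) : Prop :=
  ∀ J K : Set (Fin r),
    Subgroup.closure (ρ '' J) ⊓ Subgroup.closure (ρ '' K) =
      Subgroup.closure (ρ '' (J ∩ K))

/-- A string C-group: pairwise distinct involutions, satisfying the commuting
property `(ρ i * ρ j) ^ 2 = 1` whenever `|i - j| > 1`, and the intersection property. -/
def IsStringCGroup {n r : ℕ} (ρ : Fin r → Equiv.Perm (Fin n)) : Prop :=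
  Function.Injective ρ ∧
  (∀ i, ρ i ≠ 1 ∧ ρ i * ρ i = 1) ∧
  (∀ i j : Fin r, ((i : ℕ) + 1 < (j : ℕ) ∨ (j : ℕ) + 1 < (i : ℕ)) → (ρ i * ρ j) ^ 2 = 1) ∧
  IntersectionProperty ρ

open Equiv Equiv.Perm Subgroup

section Transpositions

variable {α : Type*} [DecidableEq α] {H : Subgroup (Perm α)}

theorem swap_apply_apply_mem {σ : Perm α} {x y : α} (hσ : σ ∈ H) (h : swap x y ∈ H) :
    swap (σ x) (σ y) ∈ H := by
  rw [swap_apply_apply]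
  exact H.mul_mem (H.mul_mem hσ h) (H.inv_mem hσ)

theorem swap_mem_of_swap_mem_of_swap_mul_swap_mem {a b c d e : α}
    (hab : swap a b ∈ H) (hbcde : swap b c * swap d e ∈ H) (hnd : [a, b, c, d, e].Nodup) :
    swap d e ∈ H := by
  simp only [List.nodup_cons, List.mem_cons, List.not_mem_nil, or_false, List.nodup_nil,
    not_or] at hnd
  have hbc : swap b c ∈ H := by
    simpa [swap_apply_def, Ne.symm, *] using swap_apply_apply_mem (H.mul_mem hab hbcde) hab
  simpa [← mul_assoc] using H.mul_mem hbc hbcde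

theorem swap_mem_of_swap_mul_swap_mem_of_swap_mem {a b c d e f : α}
    (habcd : swap a b * swap c d ∈ H) (hbcde : swap b c * swap d e ∈ H) (hef : swap e f ∈ H)
    (hnd : [a, b, c, d, e, f].Nodup) :
    swap c d ∈ H := by
  simp only [List.nodup_cons, List.mem_cons, List.not_mem_nil, or_false, List.nodup_nil,
    not_or] at hnd
  have hdf : swap d f ∈ H := by
    simpa [swap_apply_def, Ne.symm, *] using swap_apply_apply_mem hbcde hef
  have hcf : swap c f ∈ H := by
    simpa [swap_apply_def, Ne.symm, *] using swap_apply_apply_mem habcd hdf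
  simpa [swap_apply_def, Ne.symm, swap_comm, *] using swap_apply_apply_mem hdf hcf

theorem swap_notMem_closure_of_subset_alternatingGroup [Fintype α] {S : Set (Perm α)}
    (hS : S ⊆ alternatingGroup α) {x y : α} (hxy : x ≠ y) : swap x y ∉ closure S := fun h => by
  have heven := (closure_le _).2 hS h
  rw [mem_alternatingGroup, sign_swap hxy] at heven
  exact absurd heven (by decide)

end Transpositions

theorem IsStringCGroup.intersectionProperty {n r : ℕ} {ρ : Fin r → Perm (Fin n)}
    (h : IsStringCGroup ρ) : IntersectionProperty ρ :=
  h.2.2.2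

theorem closure_image_inter_le {G ι : Type*} [Group G] (ρ : ι → G) (J K : Set ι) :
    closure (ρ '' (J ∩ K)) ≤ closure (ρ '' J) ⊓ closure (ρ '' K) :=
  le_inf (closure_mono (Set.image_mono Set.inter_subset_left))
    (closure_mono (Set.image_mono Set.inter_subset_right))

theorem not_intersectionProperty_of_lt {n r : ℕ} {ρ : Fin r → Perm (Fin n)} {J K : Set (Fin r)}
    (h : closure (ρ '' (J ∩ K)) < closure (ρ '' J) ⊓ closure (ρ '' K)) :
    ¬ IntersectionProperty ρ :=
  fun hρ => (hρ J K ▸ h).false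

theorem stmt_9 (n i : ℕ) (hn : 9 ≤ n) (hi : i ≤ n - 7)
    (ρ : Fin (n - 3) → Equiv.Perm (Fin n))
    (hlow : ∀ j : Fin (n - 3), (j : ℕ) ≤ i → ρ j =
      Equiv.swap (⟨(j : ℕ), by have := j.isLt; omega⟩ : Fin n) ⟨(j : ℕ) + 1, by have := j.isLt; omega⟩)
    (hip1 : ρ ⟨i + 1, by omega⟩ =
      Equiv.swap (⟨i + 1, by omega⟩ : Fin n) ⟨i + 2, by omega⟩ *
        Equiv.swap (⟨i + 3, by omega⟩ : Fin n) ⟨i + 4, by omega⟩)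
    (hip2 : ρ ⟨i + 2, by omega⟩ =
      Equiv.swap (⟨i + 2, by omega⟩ : Fin n) ⟨i + 3, by omega⟩ *
        Equiv.swap (⟨i + 4, by omega⟩ : Fin n) ⟨i + 5, by omega⟩)
    (hhigh : ∀ j : Fin (n - 3), i + 3 ≤ (j : ℕ) → ρ j =
      Equiv.swap (⟨(j : ℕ) + 2, by have := j.isLt; omega⟩ : Fin n) ⟨(j : ℕ) + 3, by have := j.isLt; omega⟩) :
    Subgroup.closure (ρ '' ({j : Fin (n - 3) | (j : ℕ) ≤ i + 2} ∩ {j : Fin (n - 3) | i + 1 ≤ (j : ℕ)})) <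
      Subgroup.closure (ρ '' {j : Fin (n - 3) | (j : ℕ) ≤ i + 2}) ⊓
        Subgroup.closure (ρ '' {j : Fin (n - 3) | i + 1 ≤ (j : ℕ)}) ∧
    ¬ IntersectionProperty ρ ∧ ¬ IsStringCGroup ρ := by
  set J := {j : Fin (n - 3) | (j : ℕ) ≤ i + 2}
  set K := {j : Fin (n - 3) | i + 1 ≤ (j : ℕ)}
  let v : Fin 7 ↪ Fin n := ⟨fun k => ⟨i + k, by omega⟩, fun k l h => by simpa [Fin.ext_iff] using h⟩
  have memJ (j : Fin (n - 3)) (hj : (j : ℕ) ≤ i + 2) : ρ j ∈ closure (ρ '' J) :=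
    subset_closure ⟨j, hj, rfl⟩
  have memK (j : Fin (n - 3)) (hj : i + 1 ≤ (j : ℕ)) : ρ j ∈ closure (ρ '' K) :=
    subset_closure ⟨j, hj, rfl⟩
  have hρi : ρ ⟨i, by omega⟩ = swap (v 0) (v 1) := hlow _ le_rfl
  have hρi₁ : ρ ⟨i + 1, by omega⟩ = swap (v 1) (v 2) * swap (v 3) (v 4) := hip1
  have hρi₂ : ρ ⟨i + 2, by omega⟩ = swap (v 2) (v 3) * swap (v 4) (v 5) := hip2
  have hρi₃ : ρ ⟨i + 3, by omega⟩ = swap (v 5) (v 6) := hhigh _ le_rfl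
  have hJ : swap (v 3) (v 4) ∈ closure (ρ '' J) :=
    swap_mem_of_swap_mem_of_swap_mul_swap_mem (hρi ▸ memJ _ (by simp))
      (hρi₁ ▸ memJ _ (by simp)) (by simp)
  have hK : swap (v 3) (v 4) ∈ closure (ρ '' K) :=
    swap_mem_of_swap_mul_swap_mem_of_swap_mem (hρi₁ ▸ memK _ (by simp))
      (hρi₂ ▸ memK _ (by simp)) (hρi₃ ▸ memK _ (by simp)) (by simp)
  have hJK : ρ '' (J ∩ K) ⊆ alternatingGroup (Fin n) := by
    rintro _ ⟨j, ⟨hjJ : (j : ℕ) ≤ i + 2, hjK : i + 1 ≤ (j : ℕ)⟩, rfl⟩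
    obtain hj | hj : j = ⟨i + 1, by omega⟩ ∨ j = ⟨i + 2, by omega⟩ := by
      simp only [Fin.ext_iff]
      omega
    all_goals
      simp only [hj, hρi₁, hρi₂]
      exact mul_mem_alternatingGroup_of_isSwap ⟨_, _, by simp, rfl⟩ ⟨_, _, by simp, rfl⟩
  have hlt : closure (ρ '' (J ∩ K)) < closure (ρ '' J) ⊓ closure (ρ '' K) :=
    SetLike.lt_iff_le_and_exists.2 ⟨closure_image_inter_le ρ J K, _, mem_inf.2 ⟨hJ, hK⟩,
      swap_notMem_closure_of_subset_alternatingGroup hJK (by simp)⟩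
  exact ⟨hlt, not_intersectionProperty_of_lt hlt,
    fun h => not_intersectionProperty_of_lt hlt h.intersectionProperty⟩
end

section
/- Let n ≥ 11 and let i be an integer with 0 ≤ i ≤ n−9. Define permutations ρ_0, …, ρ_{n−5} of {1, …, n} by: ρ_j = (j+1, j+2) for 0 ≤ j ≤ i; ρ_{i+1} = (i+2, i+3)(i+4, i+5); ρ_{i+2} = (i+3, i+4)(i+5, i+6); ρ_j = (j+3, j+4) for i+3 ≤ j ≤ n−7; ρ_{n−6} = (n−3, n−2)(n−1, n); and ρ_{n−5} = (n−2, n−1). Then the intersection of the subgroup generated by ρ_0, …, ρ_{i+2} with the subgroup generated by ρ_{i+1}, …, ρ_{n−5} is strictly larger than the subgroup generated by ρ_{i+1} and ρ_{i+2}; in particular, ρ_0, …, ρ_{n−5} do not satisfy the intersection property and hence do not form a string C-group. -/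
/-!
The witness is the transposition `(i+2 i+3)` (labels as in the paper; the point `k` is
`⟨k - 1, _⟩ : Fin n`). It is odd while `ρ_{i+1}` and `ρ_{i+2}` are even, so it is not in
`⟨ρ_{i+1}, ρ_{i+2}⟩`. Conjugating `ρ_i = (i+1 i+2)` by `ρ_{i+1}` gives `(i+1 i+3)`, and the
two generate it. On the right, the transpositions `ρ_{i+3}, …, ρ_{n-7}` and
`ρ_{n-6} ρ_{n-5} ρ_{n-6} = (n-3 n)` chain together to `(i+6 n)`; conjugating by `ρ_{i+2}`
and `ρ_{i+1}` gives `(i+5 n)` and `(i+4 n)`, hence `(i+4 i+5)`, and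
`ρ_{i+1} (i+4 i+5) = (i+2 i+3)`.
-/

open Equiv Equiv.Perm

namespace Subgroup

variable {α : Type*} [DecidableEq α] {H : Subgroup (Perm α)}

theorem swap_apply_mem {σ : Perm α} {x y : α} (hσ : σ ∈ H) (h : swap x y ∈ H) :
    swap (σ x) (σ y) ∈ H := by
  rw [swap_apply_apply]
  exact mul_mem (mul_mem hσ h) (inv_mem hσ)

theorem swap_mem_of_swap_mul_mem {a b c : α} {w : Perm α} (hab : a ≠ b) (hac : a ≠ c)
    (hwa : w a = a) (hwb : w b = b) (h₁ : swap a b ∈ H) (h₂ : swap b c * w ∈ H) :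
    swap b c ∈ H := by
  have hac' : swap a c ∈ H := by
    simpa [hwa, hwb, swap_apply_of_ne_of_ne hab hac] using swap_apply_mem h₂ h₁
  rw [swap_comm] at h₁
  exact SubmonoidClass.swap_mem_trans H h₁ hac'

theorem swap_notMem_closure_of_sign_eq_one [Fintype α] {S : Set (Perm α)}
    (hS : ∀ σ ∈ S, sign σ = 1) {x y : α} (hxy : x ≠ y) : swap x y ∉ closure S := by
  intro h
  have hle : closure S ≤ alternatingGroup α :=
    (closure_le _).2 fun σ hσ => mem_alternatingGroup.2 (hS σ hσ)
  have := mem_alternatingGroup.1 (hle h)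
  rw [sign_swap hxy] at this
  exact absurd this (by decide)

end Subgroup

theorem Fin.swap_mem_of_swap_succ_mem {n : ℕ} {H : Subgroup (Perm (Fin n))} {a b : ℕ}
    (hab : a ≤ b) (hb : b < n)
    (h : ∀ k, a ≤ k → (hkb : k < b) →
      swap (⟨k, by omega⟩ : Fin n) ⟨k + 1, by omega⟩ ∈ H) :
    swap (⟨a, by omega⟩ : Fin n) ⟨b, hb⟩ ∈ H := by
  induction b, hab using Nat.le_induction with
  | base => rw [swap_self]; exact one_mem H
  | succ b hab ih =>
    exact SubmonoidClass.swap_mem_trans H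
      (ih (by omega) fun k hak hkb => h k hak (by omega)) (h b hab (by omega))

theorem swap_mem_of_right_generators_mem {n i : ℕ} (hi : i + 9 ≤ n)
    {H : Subgroup (Perm (Fin n))}
    (hchain : ∀ j, i + 3 ≤ j → (hj : j ≤ n - 7) →
      swap (⟨j + 2, by omega⟩ : Fin n) ⟨j + 3, by omega⟩ ∈ H)
    (h₁ : swap (⟨i + 1, by omega⟩ : Fin n) ⟨i + 2, by omega⟩ *
        swap (⟨i + 3, by omega⟩ : Fin n) ⟨i + 4, by omega⟩ ∈ H)
    (h₂ : swap (⟨i + 2, by omega⟩ : Fin n) ⟨i + 3, by omega⟩ *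
        swap (⟨i + 4, by omega⟩ : Fin n) ⟨i + 5, by omega⟩ ∈ H)
    (h₃ : swap (⟨n - 4, by omega⟩ : Fin n) ⟨n - 3, by omega⟩ *
        swap (⟨n - 2, by omega⟩ : Fin n) ⟨n - 1, by omega⟩ ∈ H)
    (h₄ : swap (⟨n - 3, by omega⟩ : Fin n) ⟨n - 2, by omega⟩ ∈ H) :
    swap (⟨i + 1, by omega⟩ : Fin n) ⟨i + 2, by omega⟩ ∈ H := by
  have htail : swap (⟨n - 4, by omega⟩ : Fin n) ⟨n - 1, by omega⟩ ∈ H := by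
    convert Subgroup.swap_apply_mem h₃ h₄ using 2 <;> grind [Perm.mul_apply]
  have hrun : swap (⟨i + 5, by omega⟩ : Fin n) ⟨n - 4, by omega⟩ ∈ H :=
    Fin.swap_mem_of_swap_succ_mem (by omega) _ fun k hk hk' => by
      convert hchain (k - 2) (by omega) (by omega) using 3 <;> omega
  have hi5 := SubmonoidClass.swap_mem_trans H hrun htail
  have hi4 : swap (⟨i + 4, by omega⟩ : Fin n) ⟨n - 1, by omega⟩ ∈ H := by
    convert Subgroup.swap_apply_mem h₂ hi5 using 2 <;> grind [Perm.mul_apply]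
  have hi3 : swap (⟨i + 3, by omega⟩ : Fin n) ⟨n - 1, by omega⟩ ∈ H := by
    convert Subgroup.swap_apply_mem h₁ hi4 using 2 <;> grind [Perm.mul_apply]
  rw [swap_comm] at hi4
  simpa [mul_assoc] using mul_mem h₁ (SubmonoidClass.swap_mem_trans H hi3 hi4)

theorem stmt_10 (n i : ℕ) (hn : 11 ≤ n) (hi : i ≤ n - 9)
    (ρ : Fin (n - 4) → Equiv.Perm (Fin n))
    (hlow : ∀ j : Fin (n - 4), (j : ℕ) ≤ i → ρ j =
      Equiv.swap (⟨(j : ℕ), by have := j.isLt; omega⟩ : Fin n) ⟨(j : ℕ) + 1, by have := j.isLt; omega⟩)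
    (hip1 : ρ ⟨i + 1, by omega⟩ =
      Equiv.swap (⟨i + 1, by omega⟩ : Fin n) ⟨i + 2, by omega⟩ *
        Equiv.swap (⟨i + 3, by omega⟩ : Fin n) ⟨i + 4, by omega⟩)
    (hip2 : ρ ⟨i + 2, by omega⟩ =
      Equiv.swap (⟨i + 2, by omega⟩ : Fin n) ⟨i + 3, by omega⟩ *
        Equiv.swap (⟨i + 4, by omega⟩ : Fin n) ⟨i + 5, by omega⟩)
    (hhigh : ∀ j : Fin (n - 4), i + 3 ≤ (j : ℕ) → (j : ℕ) ≤ n - 7 → ρ j =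
      Equiv.swap (⟨(j : ℕ) + 2, by have := j.isLt; omega⟩ : Fin n) ⟨(j : ℕ) + 3, by have := j.isLt; omega⟩)
    (htail1 : ρ ⟨n - 6, by omega⟩ =
      Equiv.swap (⟨n - 4, by omega⟩ : Fin n) ⟨n - 3, by omega⟩ *
        Equiv.swap (⟨n - 2, by omega⟩ : Fin n) ⟨n - 1, by omega⟩)
    (htail2 : ρ ⟨n - 5, by omega⟩ =
      Equiv.swap (⟨n - 3, by omega⟩ : Fin n) ⟨n - 2, by omega⟩) :
    Subgroup.closure (ρ '' ({j : Fin (n - 4) | (j : ℕ) ≤ i + 2} ∩ {j : Fin (n - 4) | i + 1 ≤ (j : ℕ)})) <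
      Subgroup.closure (ρ '' {j : Fin (n - 4) | (j : ℕ) ≤ i + 2}) ⊓
        Subgroup.closure (ρ '' {j : Fin (n - 4) | i + 1 ≤ (j : ℕ)}) ∧
    ¬ IntersectionProperty ρ ∧ ¬ IsStringCGroup ρ := by
  set J : Set (Fin (n - 4)) := {j | (j : ℕ) ≤ i + 2}
  set K : Set (Fin (n - 4)) := {j | i + 1 ≤ (j : ℕ)}
  have hJ (j : Fin (n - 4)) (hj : (j : ℕ) ≤ i + 2) : ρ j ∈ Subgroup.closure (ρ '' J) :=
    Subgroup.subset_closure (Set.mem_image_of_mem ρ hj)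
  have hK (j : Fin (n - 4)) (hj : i + 1 ≤ (j : ℕ)) : ρ j ∈ Subgroup.closure (ρ '' K) :=
    Subgroup.subset_closure (Set.mem_image_of_mem ρ hj)
  have hleft := Subgroup.swap_mem_of_swap_mul_mem (by simp) (by simp) (by grind) (by grind)
    (hlow ⟨i, by omega⟩ le_rfl ▸ hJ _ (by simp)) (hip1 ▸ hJ _ (by simp))
  have hright := swap_mem_of_right_generators_mem (by omega)
    (fun j hj₁ hj₂ => hhigh ⟨j, by omega⟩ hj₁ hj₂ ▸ hK _ (by simp; omega))
    (hip1 ▸ hK _ (by simp)) (hip2 ▸ hK _ (by simp)) (htail1 ▸ hK _ (by simp; omega))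
    (htail2 ▸ hK _ (by simp; omega))
  have heven : ∀ σ ∈ ρ '' (J ∩ K), sign σ = 1 := by
    rintro _ ⟨j, ⟨hj₁ : (j : ℕ) ≤ i + 2, hj₂ : i + 1 ≤ (j : ℕ)⟩, rfl⟩
    obtain h | h : j = ⟨i + 1, by omega⟩ ∨ j = ⟨i + 2, by omega⟩ := by
      simp only [Fin.ext_iff]; omega
    · simp [h, hip1, Fin.ext_iff]
    · simp [h, hip2, Fin.ext_iff]
  have hlt : Subgroup.closure (ρ '' (J ∩ K)) <
      Subgroup.closure (ρ '' J) ⊓ Subgroup.closure (ρ '' K) :=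
    SetLike.lt_iff_le_and_exists.2
      ⟨le_inf (Subgroup.closure_mono (Set.image_mono Set.inter_subset_left))
        (Subgroup.closure_mono (Set.image_mono Set.inter_subset_right)),
      _, Subgroup.mem_inf.2 ⟨hleft, hright⟩,
      Subgroup.swap_notMem_closure_of_sign_eq_one heven (by simp [Fin.ext_iff])⟩
  exact ⟨hlt, fun h => hlt.ne (h J K).symm, fun h => hlt.ne (h.2.2.2 J K).symm⟩
end
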